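/- arXiv:2507.11054 — 2 statements merged into one kernel-verified Lean document; each statement's English description precedes it below -/
import Mathlib

section
/- Let 0 < l ≤ 4/3 and R > 0. In ℝ², let D be the open triangle with vertices (−R/2, l/2), (R/2, l/2), and (0, 0), and let B̂ = ℝ × (−l/2, 0). Then G(D, B̂) := ∫_{D × B̂} |y−x|^{−3} d(x,y) ≤ 2·ω₁·(R − 2R ln(l/2)), where ω₁ = 2. -/
/-!
Since `‖y - x‖ ≥ max (x₁ - y₁) |y₀ - x₀|` when `y₁ < 0 < x₁`, and
`∫ a, 1 / max s |a| ^ 3 = 3 / s ^ 2`, integrating over the whole lower half-plane bounds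
the inner integral at a point `x` of `D` by `∫_{x₁}^∞ 3 / s ^ 2 ds = 3 / x₁`. The slice of
`D` at height `x₁` has length `2 (R / l) x₁`, so integrating `3 / x₁` over `D` gives exactly
`3 R`, and `3 R ≤ 4 (R - 2 R log (l / 2))` because `l / 2 ≤ 1`.
-/

open MeasureTheory Set
open scoped ENNReal

theorem lintegral_Ioi_div_pow {n : ℕ} (hn : 2 ≤ n) {c t : ℝ} (hc : 0 ≤ c) (ht : 0 < t) :
    ∫⁻ s in Ioi t, ENNReal.ofReal (c / s ^ n) =
      ENNReal.ofReal (c / ((n - 1) * t ^ (n - 1))) := by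
  have hp : -(n : ℝ) < -1 := by
    have : (2 : ℝ) ≤ n := by exact_mod_cast hn
    linarith
  have hrpow : EqOn (fun s : ℝ => ENNReal.ofReal (c / s ^ n))
      (fun s => ENNReal.ofReal (c * s ^ (-(n : ℝ)))) (Ioi t) := fun s hs => by
    simp only [Real.rpow_neg (ht.trans hs).le, Real.rpow_natCast, div_eq_mul_inv]
  rw [setLIntegral_congr_fun measurableSet_Ioi hrpow, ← ofReal_integral_eq_lintegral_ofReal
    ((integrableOn_Ioi_rpow_of_lt hp ht).const_mul c)]
  · have hn' : -(n : ℝ) + 1 = -((n - 1 : ℕ) : ℝ) := by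
      push_cast [Nat.cast_sub (by omega : 1 ≤ n)]; ring
    rw [integral_const_mul, integral_Ioi_rpow_of_lt hp ht, hn', Real.rpow_neg ht.le,
      Real.rpow_natCast]
    push_cast [Nat.cast_sub (by omega : 1 ≤ n)]
    congr 1
    field_simp
  · filter_upwards [self_mem_ae_restrict measurableSet_Ioi] with s hs
    exact mul_nonneg hc (Real.rpow_nonneg (ht.trans hs).le _)

theorem lintegral_comp_abs (f : ℝ → ℝ≥0∞) :
    ∫⁻ x, f |x| = 2 * ∫⁻ x in Ioi 0, f x := by
  have hIoi : ∫⁻ x in Ioi 0, f |x| = ∫⁻ x in Ioi 0, f x :=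
    setLIntegral_congr_fun measurableSet_Ioi fun x hx => by rw [abs_of_pos hx]
  have hIic : ∫⁻ x in Iic 0, f |x| = ∫⁻ x in Ioi 0, f x := by
    rw [← (Measure.measurePreserving_neg (volume : Measure ℝ)).setLIntegral_comp_preimage_emb
      (MeasurableEquiv.neg ℝ).measurableEmbedding, neg_preimage, neg_Iic, neg_zero,
      setLIntegral_congr Ioi_ae_eq_Ici.symm]
    exact setLIntegral_congr_fun measurableSet_Ioi fun x hx => by
      simp only [abs_neg, abs_of_pos (show 0 < x from hx)]
  rw [← lintegral_add_compl _ measurableSet_Ioi, compl_Ioi, hIoi, hIic, two_mul]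

theorem lintegral_one_div_max_abs_pow_three {t : ℝ} (ht : 0 < t) :
    ∫⁻ a, ENNReal.ofReal (1 / max t |a| ^ 3) = ENNReal.ofReal (3 / t ^ 2) := by
  have hnear :
      ∫⁻ a in Ioc 0 t, ENNReal.ofReal (1 / max t a ^ 3) = ENNReal.ofReal (1 / t ^ 2) := by
    rw [setLIntegral_congr_fun measurableSet_Ioc fun a ha => by rw [max_eq_left ha.2],
      setLIntegral_const, Real.volume_Ioc, sub_zero, ← ENNReal.ofReal_mul (by positivity)]
    congr 1
    field_simp
  have hfar :
      ∫⁻ a in Ioi t, ENNReal.ofReal (1 / max t a ^ 3) = ENNReal.ofReal (1 / (2 * t ^ 2)) := by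
    rw [setLIntegral_congr_fun measurableSet_Ioi fun a (ha : t < a) => by rw [max_eq_right ha.le],
      lintegral_Ioi_div_pow (by norm_num) zero_le_one ht]
    norm_num
  rw [lintegral_comp_abs fun a => ENNReal.ofReal (1 / max t a ^ 3),
    ← Ioc_union_Ioi_eq_Ioi ht.le, lintegral_union measurableSet_Ioi Ioc_disjoint_Ioi_same,
    hnear, hfar,
    ← ENNReal.ofReal_add (by positivity) (by positivity), ← ENNReal.ofReal_ofNat 2,
    ← ENNReal.ofReal_mul zero_le_two]
  congr 1
  field_simp
  norm_num

theorem setLIntegral_Iio_comp_sub_left (f : ℝ → ℝ≥0∞) (t : ℝ) :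
    ∫⁻ b in Iio 0, f (t - b) = ∫⁻ s in Ioi t, f s := by
  rw [← (Measure.measurePreserving_sub_left volume t).setLIntegral_comp_preimage_emb
    (MeasurableEquiv.subLeft t).measurableEmbedding]
  simp

theorem lintegral_lowerHalfPlane_one_div_max_pow_three {t : ℝ} (ht : 0 < t) (x₀ : ℝ) :
    ∫⁻ p in univ ×ˢ Iio 0, ENNReal.ofReal (1 / max (t - p.2) |p.1 - x₀| ^ 3) =
      ENNReal.ofReal (3 / t) := by
  have hslice : EqOn (fun b => ∫⁻ a, ENNReal.ofReal (1 / max (t - b) |a - x₀| ^ 3))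
      (fun b => ENNReal.ofReal (3 / (t - b) ^ 2)) (Iio 0) := fun b (hb : b < 0) => by
    dsimp only
    rw [lintegral_sub_right_eq_self (fun a => ENNReal.ofReal (1 / max (t - b) |a| ^ 3)),
      lintegral_one_div_max_abs_pow_three (by linarith)]
  rw [Measure.volume_eq_prod, ← Measure.prod_restrict, Measure.restrict_univ,
    lintegral_prod_symm _ (by fun_prop), setLIntegral_congr_fun measurableSet_Iio hslice,
    setLIntegral_Iio_comp_sub_left (fun s => ENNReal.ofReal (3 / s ^ 2)),
    lintegral_Ioi_div_pow le_rfl zero_le_three ht]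
  norm_num

theorem lintegral_triangle_div_snd {c k h : ℝ} (hc : 0 ≤ c) (hk : 0 ≤ k) :
    ∫⁻ p in {p : ℝ × ℝ | 0 < p.2 ∧ p.2 < h ∧ |p.1| < k * p.2}, ENNReal.ofReal (c / p.2) =
      ENNReal.ofReal (2 * c * k * h) := by
  set S := {p : ℝ × ℝ | 0 < p.2 ∧ p.2 < h ∧ |p.1| < k * p.2}
  have hS : MeasurableSet S :=
    (measurableSet_lt measurable_const measurable_snd).inter
      ((measurableSet_lt measurable_snd measurable_const).inter
        (measurableSet_lt measurable_fst.abs (measurable_snd.const_mul k)))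
  have hslice (b : ℝ) : ∫⁻ a, S.indicator (fun p => ENNReal.ofReal (c / p.2)) (a, b) =
      (Ioo 0 h).indicator (fun _ => ENNReal.ofReal (2 * c * k)) b := by
    by_cases hb : b ∈ Ioo 0 h
    · have hsec : (fun a => S.indicator (fun p => ENNReal.ofReal (c / p.2)) (a, b)) =
          (Ioo (-(k * b)) (k * b)).indicator fun _ => ENNReal.ofReal (c / b) := by
        ext a
        simp [S, indicator, hb.1, hb.2, abs_lt]
      have hb0 : b ≠ 0 := hb.1.ne'
      rw [hsec, lintegral_indicator_const measurableSet_Ioo, Real.volume_Ioo, indicator_of_mem hb,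
        ← ENNReal.ofReal_mul (div_nonneg hc hb.1.le)]
      congr 1
      field_simp
      ring
    · have hsec : (fun a => S.indicator (fun p => ENNReal.ofReal (c / p.2)) (a, b)) = 0 := by
        ext a
        exact indicator_of_notMem (fun hab => hb ⟨hab.1, hab.2.1⟩) _
      rw [hsec, indicator_of_notMem hb, lintegral_zero_fun]
  rw [← lintegral_indicator hS, Measure.volume_eq_prod, lintegral_prod_symm _ (by fun_prop),
    lintegral_congr hslice, lintegral_indicator_const measurableSet_Ioo, Real.volume_Ioo, sub_zero,
    ← ENNReal.ofReal_mul (by positivity)]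

theorem setLIntegral_euclideanSpace_fin_two (f : ℝ × ℝ → ℝ≥0∞) (s : Set (ℝ × ℝ)) :
    ∫⁻ x in {x : EuclideanSpace ℝ (Fin 2) | (x 0, x 1) ∈ s}, f (x 0, x 1) = ∫⁻ p in s, f p :=
  ((EuclideanSpace.volume_preserving_symm_measurableEquiv_toLp (Fin 2)).trans
    (volume_preserving_finTwoArrow ℝ)).setLIntegral_comp_preimage_emb
    ((MeasurableEquiv.toLp 2 (Fin 2 → ℝ)).symm.trans
      (MeasurableEquiv.finTwoArrow)).measurableEmbedding f s

theorem lintegral_lowerHalfPlane_one_div_norm_pow_three_le {x : EuclideanSpace ℝ (Fin 2)}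
    (hx : 0 < x 1) :
    ∫⁻ y in {y : EuclideanSpace ℝ (Fin 2) | y 1 < 0}, ENNReal.ofReal (1 / ‖y - x‖ ^ 3) ≤
      ENNReal.ofReal (3 / x 1) := by
  have hkernel : ∀ y ∈ {y : EuclideanSpace ℝ (Fin 2) | y 1 < 0},
      ENNReal.ofReal (1 / ‖y - x‖ ^ 3) ≤ ENNReal.ofReal (1 / max (x 1 - y 1) |y 0 - x 0| ^ 3) := by
    intro y (hy : y 1 < 0)
    have hgap : 0 < x 1 - y 1 := by linarith
    have h0 : |y 0 - x 0| ≤ ‖y - x‖ := by simpa using PiLp.norm_apply_le (y - x) 0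
    have h1 : x 1 - y 1 ≤ ‖y - x‖ :=
      (le_abs_self _).trans <| (abs_sub_comm _ _).trans_le <| by
        simpa using PiLp.norm_apply_le (y - x) 1
    exact ENNReal.ofReal_le_ofReal <| one_div_le_one_div_of_le (by positivity) <|
      pow_le_pow_left₀ (hgap.le.trans (le_max_left _ _)) (max_le h1 h0) 3
  calc _ ≤ ∫⁻ y in {y : EuclideanSpace ℝ (Fin 2) | y 1 < 0},
        ENNReal.ofReal (1 / max (x 1 - y 1) |y 0 - x 0| ^ 3) :=
        setLIntegral_mono (by fun_prop) hkernel
    _ = ∫⁻ p in univ ×ˢ Iio 0, ENNReal.ofReal (1 / max (x 1 - p.2) |p.1 - x 0| ^ 3) := by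
        rw [← setLIntegral_euclideanSpace_fin_two]
        simp
    _ = ENNReal.ofReal (3 / x 1) := lintegral_lowerHalfPlane_one_div_max_pow_three hx (x 0)

/-- Estimate of `G` for the open triangle `D` with vertices `(−R/2, l/2)`, `(R/2, l/2)`,
`(0,0)` against the fattened line `B̂ = ℝ × (−l/2, 0)`:
`G(D, B̂) ≤ 2 ω₁ (R − 2R ln(l/2))` with `ω₁ = 2`. -/
theorem stmt_5 (l R : ℝ) (hl : 0 < l) (hl' : l ≤ 4 / 3) (hR : 0 < R)
    (D Bhat : Set (EuclideanSpace ℝ (Fin 2)))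
    (hD : D = {p | 0 < p 1 ∧ p 1 < l / 2 ∧ |p 0| < (R / l) * p 1})
    (hB : Bhat = {p | p 1 ∈ Set.Ioo (-l / 2) 0}) :
    (∫⁻ x in D, ∫⁻ y in Bhat, ENNReal.ofReal (1 / ‖y - x‖ ^ 3)) ≤
      ENNReal.ofReal (2 * 2 * (R - 2 * R * Real.log (l / 2))) := by
  subst hD hB
  have hlog : Real.log (l / 2) ≤ 0 := Real.log_nonpos (by positivity) (by linarith)
  calc _ ≤ ∫⁻ x in _, ENNReal.ofReal (3 / x 1) :=
        setLIntegral_mono (by fun_prop) fun x hx =>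
          (lintegral_mono_set fun y hy => hy.2).trans
            (lintegral_lowerHalfPlane_one_div_norm_pow_three_le hx.1)
    _ = ENNReal.ofReal (2 * 3 * (R / l) * (l / 2)) :=
        (setLIntegral_euclideanSpace_fin_two (fun p => ENNReal.ofReal (3 / p.2)) _).trans
          (lintegral_triangle_div_snd zero_le_three (by positivity))
    _ ≤ ENNReal.ofReal (2 * 2 * (R - 2 * R * Real.log (l / 2))) := by
        refine ENNReal.ofReal_le_ofReal ?_
        field_simp
        nlinarith [mul_nonneg hR.le (neg_nonneg.mpr hlog)]
end

section
/- Let N ≥ 2, R, l, d > 0 with d < l. Let A = Q_R'(0) × (d/2, l/2) and B = Q_R'(0) × (−l/2, −d/2) with Q_R'(0) = [−R/2, R/2]^{N−1}. Then G(A, B) ≤ R^{N−1} ω_{N−1} (2 ln((l+d)/2) − ln(l/2) − ln(d/2)), where G(A,B) = ∫_{A×B} |y−x|^{−(N+1)} d(x,y) and ω_{N−1} = ℋ^{N−1}(B₁'(0)). -/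
/-!
Write `ℝ^{n+2} = ℝ × ℝ^{n+1}` by splitting off the last coordinate. By polar coordinates, the
kernel `‖y - x‖^{-(n+3)}` integrated over a hyperplane at height distance `|c|` from `x` is
`ω / c²`, the radial integral being elementary.
Integrating `ω / (s - t)²` over `s ∈ (a, b)` and then `ω ((t - b)⁻¹ - (t - a)⁻¹)` over a
cylinder `(c, e) × Q` computes the interaction of a cylinder with a whole slab exactly:
`vol Q · ω (log (e - b) - log (e - a) - log (c - b) + log (c - a))`.
Since `B` lies in the slab `(-l/2, -d/2) × ℝ^{n+1}`, this gives the bound with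
`2 log ((l + d)/2) - log l - log d`, which is at most the claimed constant.
-/

open MeasureTheory Set Filter Topology
open scoped ENNReal

theorem lintegral_Ioo_ofReal_eq_sub_of_hasDerivAt {F f : ℝ → ℝ} {a b : ℝ} (hab : a ≤ b)
    (hcont : ContinuousOn F (Icc a b)) (hderiv : ∀ x ∈ Ioo a b, HasDerivAt F (f x) x)
    (hf : ∀ x ∈ Ioo a b, 0 ≤ f x) :
    ∫⁻ x in Ioo a b, ENNReal.ofReal (f x) = ENNReal.ofReal (F b - F a) := by
  have hint : IntegrableOn f (Ioc a b) :=
    intervalIntegral.integrableOn_deriv_of_nonneg hcont hderiv hf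
  rw [← ofReal_integral_eq_lintegral_ofReal (hint.mono_set Ioo_subset_Ioc_self)
      (ae_restrict_of_forall_mem measurableSet_Ioo hf), ← integral_Ioc_eq_integral_Ioo,
    ← intervalIntegral.integral_of_le hab,
    intervalIntegral.integral_eq_sub_of_hasDerivAt_of_le hab hcont hderiv
      ((intervalIntegrable_iff_integrableOn_Ioc_of_le hab).2 hint)]

section Radial

theorem tendsto_div_sqrt_sq_add_sq_atTop (c : ℝ) :
    Tendsto (fun r : ℝ => r / √(r ^ 2 + c ^ 2)) atTop (𝓝 1) := by
  have hsq : Tendsto (fun r : ℝ => 1 - c ^ 2 / (r ^ 2 + c ^ 2)) atTop (𝓝 1) := by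
    simpa using tendsto_const_nhds.sub <| tendsto_const_nhds.div_atTop <|
      (tendsto_pow_atTop two_ne_zero).atTop_add (tendsto_const_nhds (x := c ^ 2))
  refine (Real.sqrt_one ▸ hsq.sqrt).congr' ?_
  filter_upwards [eventually_gt_atTop 0] with r hr
  have hpos : 0 < r ^ 2 + c ^ 2 := by positivity
  have : 1 - c ^ 2 / (r ^ 2 + c ^ 2) = r ^ 2 / (r ^ 2 + c ^ 2) := by field_simp; ring
  rw [this, Real.sqrt_div' _ hpos.le, Real.sqrt_sq hr.le]

variable {c : ℝ}

theorem hasDerivAt_div_sqrt_sq_add_sq (hc : c ≠ 0) (r : ℝ) :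
    HasDerivAt (fun r : ℝ => r / √(r ^ 2 + c ^ 2)) (c ^ 2 / √(r ^ 2 + c ^ 2) ^ 3) r := by
  have hpos : 0 < r ^ 2 + c ^ 2 := by positivity
  have hsqrt : HasDerivAt (fun r : ℝ => √(r ^ 2 + c ^ 2)) (r / √(r ^ 2 + c ^ 2)) r := by
    convert ((hasDerivAt_pow 2 r).add_const (c ^ 2)).sqrt hpos.ne' using 1
    ring
  refine ((hasDerivAt_id r).div hsqrt (Real.sqrt_pos.2 hpos).ne').congr_deriv ?_
  have := Real.sq_sqrt hpos.le
  simp only [id]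
  field_simp
  linear_combination this

noncomputable def radialPrimitive (k : ℕ) (c r : ℝ) : ℝ :=
  (r / √(r ^ 2 + c ^ 2)) ^ (k + 1) / ((k + 1) * c ^ 2)

variable {k : ℕ}

theorem hasDerivAt_radialPrimitive (hc : c ≠ 0) (r : ℝ) :
    HasDerivAt (radialPrimitive k c) (r ^ k * (√(r ^ 2 + c ^ 2) ^ (k + 3))⁻¹) r := by
  refine (((hasDerivAt_div_sqrt_sq_add_sq hc r).pow (k + 1)).div_const
    ((k + 1) * c ^ 2)).congr_deriv ?_
  have : 0 < √(r ^ 2 + c ^ 2) := Real.sqrt_pos.2 (by positivity)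
  push_cast
  field_simp
  rw [div_pow, pow_add]
  field_simp

theorem tendsto_radialPrimitive_atTop :
    Tendsto (radialPrimitive k c) atTop (𝓝 (1 / ((k + 1) * c ^ 2))) := by
  unfold radialPrimitive
  simpa only [one_pow] using
    ((tendsto_div_sqrt_sq_add_sq_atTop c).pow (k + 1)).div_const ((k + 1) * c ^ 2)

theorem radialPrimitive_zero : radialPrimitive k c 0 = 0 := by
  simp [radialPrimitive]

theorem integrableOn_Ioi_pow_mul_inv_sqrt_sq_add_sq_pow (hc : c ≠ 0) :
    IntegrableOn (fun r : ℝ => r ^ k * (√(r ^ 2 + c ^ 2) ^ (k + 3))⁻¹) (Ioi 0) :=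
  integrableOn_Ioi_deriv_of_nonneg
    (hasDerivAt_radialPrimitive hc 0).continuousAt.continuousWithinAt
    (fun r _ => hasDerivAt_radialPrimitive hc r)
    (fun r (hr : 0 < r) => by positivity)
    tendsto_radialPrimitive_atTop

theorem integral_Ioi_pow_mul_inv_sqrt_sq_add_sq_pow (hc : c ≠ 0) :
    ∫ r in Ioi (0 : ℝ), r ^ k * (√(r ^ 2 + c ^ 2) ^ (k + 3))⁻¹ = 1 / ((k + 1) * c ^ 2) := by
  rw [integral_Ioi_of_hasDerivAt_of_nonneg
    (hasDerivAt_radialPrimitive hc 0).continuousAt.continuousWithinAt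
    (fun r _ => hasDerivAt_radialPrimitive hc r)
    (fun r (hr : 0 < r) => by positivity)
    tendsto_radialPrimitive_atTop, radialPrimitive_zero, sub_zero]

end Radial

theorem lintegral_inv_sqrt_norm_sub_sq_add_sq_pow {E : Type*} [NormedAddCommGroup E]
    [NormedSpace ℝ E] [FiniteDimensional ℝ E] [MeasurableSpace E] [BorelSpace E]
    (μ : Measure E) [μ.IsAddHaarMeasure] {k : ℕ} (hE : Module.finrank ℝ E = k + 1)
    {c : ℝ} (hc : c ≠ 0) (v : E) :
    ∫⁻ w, ENNReal.ofReal ((√(‖w - v‖ ^ 2 + c ^ 2) ^ (k + 3))⁻¹) ∂μ =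
      ENNReal.ofReal (μ.real (Metric.ball 0 1) / c ^ 2) := by
  have : Nontrivial E := Module.nontrivial_of_finrank_eq_succ hE
  have hint : Integrable (fun w : E => (√(‖w‖ ^ 2 + c ^ 2) ^ (k + 3))⁻¹) μ :=
    (integrable_fun_norm_addHaar μ (f := fun r => (√(r ^ 2 + c ^ 2) ^ (k + 3))⁻¹)).2
      (by simpa only [hE, add_tsub_cancel_right, smul_eq_mul]
        using integrableOn_Ioi_pow_mul_inv_sqrt_sq_add_sq_pow hc)
  rw [lintegral_sub_right_eq_self (fun w => ENNReal.ofReal ((√(‖w‖ ^ 2 + c ^ 2) ^ (k + 3))⁻¹)) v,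
    ← ofReal_integral_eq_lintegral_ofReal hint (ae_of_all _ fun w => by positivity),
    integral_fun_norm_addHaar μ (fun r => (√(r ^ 2 + c ^ 2) ^ (k + 3))⁻¹), hE]
  simp only [add_tsub_cancel_right, smul_eq_mul, nsmul_eq_mul,
    integral_Ioi_pow_mul_inv_sqrt_sq_add_sq_pow hc]
  congr 1
  push_cast
  field_simp

section SplitLast

noncomputable def splitLast (n : ℕ) :
    EuclideanSpace ℝ (Fin (n + 1)) ≃ᵐ ℝ × EuclideanSpace ℝ (Fin n) :=
  (MeasurableEquiv.toLp 2 (Fin (n + 1) → ℝ)).symm.trans <|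
    (MeasurableEquiv.piFinSuccAbove (fun _ => ℝ) (Fin.last n)).trans <|
      (MeasurableEquiv.refl ℝ).prodCongr (MeasurableEquiv.toLp 2 (Fin n → ℝ))

variable {n : ℕ}

@[simp]
theorem splitLast_apply (x : EuclideanSpace ℝ (Fin (n + 1))) :
    splitLast n x = (x (Fin.last n), WithLp.toLp 2 fun i => x i.castSucc) := by
  ext i
  · rfl
  · exact congrArg x (Fin.succAbove_last_apply i)

theorem measurePreserving_splitLast : MeasurePreserving (splitLast n) :=
  ((MeasurePreserving.id volume).prod
    (EuclideanSpace.volume_preserving_symm_measurableEquiv_toLp (Fin n)).symm).comp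
    ((volume_preserving_piFinSuccAbove (fun _ => ℝ) (Fin.last n)).comp
      (EuclideanSpace.volume_preserving_symm_measurableEquiv_toLp (Fin (n + 1))))

theorem norm_sub_eq_sqrt_splitLast (x y : EuclideanSpace ℝ (Fin (n + 1))) :
    ‖y - x‖ = √(‖(splitLast n y).2 - (splitLast n x).2‖ ^ 2 +
      ((splitLast n y).1 - (splitLast n x).1) ^ 2) := by
  rw [EuclideanSpace.norm_eq, EuclideanSpace.norm_eq, Real.sq_sqrt (by positivity),
    Fin.sum_univ_castSucc]
  simp [add_comm]

theorem setLIntegral_preimage_splitLast {f : ℝ × EuclideanSpace ℝ (Fin n) → ℝ≥0∞}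
    (hf : Measurable f) (I : Set ℝ) (Q : Set (EuclideanSpace ℝ (Fin n))) :
    ∫⁻ x in splitLast n ⁻¹' (I ×ˢ Q), f (splitLast n x) = ∫⁻ s in I, ∫⁻ w in Q, f (s, w) := by
  rw [measurePreserving_splitLast.setLIntegral_comp_preimage_emb
    (splitLast n).measurableEmbedding, Measure.volume_eq_prod, ← Measure.prod_restrict,
    lintegral_prod _ hf.aemeasurable]

end SplitLast

theorem volume_setOf_forall_abs_le {ι : Type*} [Fintype ι] {r : ℝ} (hr : 0 ≤ r) :
    volume {v : EuclideanSpace ℝ ι | ∀ i, |v i| ≤ r} =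
      ENNReal.ofReal ((2 * r) ^ Fintype.card ι) := by
  have hcube : {v : EuclideanSpace ℝ ι | ∀ i, |v i| ≤ r} =
      WithLp.ofLp ⁻¹' Metric.closedBall 0 r := by
    ext v
    simp [pi_norm_le_iff_of_nonneg hr, Real.norm_eq_abs]
  rw [hcube, (PiLp.volume_preserving_ofLp ι).measure_preimage
    measurableSet_closedBall.nullMeasurableSet, Real.volume_pi_closedBall _ hr]

section Slab

variable {n : ℕ}

theorem lintegral_slab_inv_norm_sub_pow (x : EuclideanSpace ℝ (Fin (n + 2))) {a b : ℝ}
    (hab : a ≤ b) (hb : b < x (Fin.last (n + 1))) :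
    ∫⁻ y in splitLast (n + 1) ⁻¹' (Ioo a b ×ˢ univ), ENNReal.ofReal (1 / ‖y - x‖ ^ (n + 3)) =
      ENNReal.ofReal (volume.real (Metric.ball (0 : EuclideanSpace ℝ (Fin (n + 1))) 1) *
        ((x (Fin.last (n + 1)) - b)⁻¹ - (x (Fin.last (n + 1)) - a)⁻¹)) := by
  set ω := volume.real (Metric.ball (0 : EuclideanSpace ℝ (Fin (n + 1))) 1)
  set t := x (Fin.last (n + 1))
  set v := (splitLast (n + 1) x).2
  set f : ℝ × EuclideanSpace ℝ (Fin (n + 1)) → ℝ≥0∞ :=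
    fun p => ENNReal.ofReal ((√(‖p.2 - v‖ ^ 2 + (p.1 - t) ^ 2) ^ (n + 3))⁻¹)
  have hderiv : ∀ s ∈ Icc a b, HasDerivAt (fun s => ω * (t - s)⁻¹) (ω / (s - t) ^ 2) s := by
    intro s hs
    have hts : t - s ≠ 0 := by linarith [hs.2]
    have hst : s - t ≠ 0 := by linarith [hs.2]
    refine ((((hasDerivAt_id s).const_sub t).inv hts).const_mul ω).congr_deriv ?_
    simp only [id]
    field_simp
    ring
  calc ∫⁻ y in splitLast (n + 1) ⁻¹' (Ioo a b ×ˢ univ), ENNReal.ofReal (1 / ‖y - x‖ ^ (n + 3))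
      = ∫⁻ y in splitLast (n + 1) ⁻¹' (Ioo a b ×ˢ univ), f (splitLast (n + 1) y) := by
        simp_rw [norm_sub_eq_sqrt_splitLast x, one_div]
        rfl
    _ = ∫⁻ s in Ioo a b, ∫⁻ w, f (s, w) := by
        rw [setLIntegral_preimage_splitLast (by fun_prop), Measure.restrict_univ]
    _ = ∫⁻ s in Ioo a b, ENNReal.ofReal (ω / (s - t) ^ 2) :=
        setLIntegral_congr_fun measurableSet_Ioo fun s hs =>
          lintegral_inv_sqrt_norm_sub_sq_add_sq_pow volume finrank_euclideanSpace_fin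
            (sub_ne_zero.2 (hs.2.trans hb).ne) v
    _ = ENNReal.ofReal (ω * ((t - b)⁻¹ - (t - a)⁻¹)) := by
        rw [lintegral_Ioo_ofReal_eq_sub_of_hasDerivAt hab
          (fun s hs => (hderiv s hs).continuousAt.continuousWithinAt)
          (fun s hs => hderiv s (Ioo_subset_Icc_self hs)) (fun s _ => by positivity), mul_sub]

theorem lintegral_cylinder_lintegral_slab_inv_norm_sub_pow
    {Q : Set (EuclideanSpace ℝ (Fin (n + 1)))} (hQ : MeasurableSet Q) {a b c e : ℝ}
    (hab : a ≤ b) (hbc : b < c) (hce : c ≤ e) :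
    ∫⁻ x in splitLast (n + 1) ⁻¹' (Ioo c e ×ˢ Q),
        ∫⁻ y in splitLast (n + 1) ⁻¹' (Ioo a b ×ˢ univ), ENNReal.ofReal (1 / ‖y - x‖ ^ (n + 3)) =
      volume Q * ENNReal.ofReal (volume.real (Metric.ball (0 : EuclideanSpace ℝ (Fin (n + 1))) 1) *
        (Real.log (e - b) - Real.log (e - a) - Real.log (c - b) + Real.log (c - a))) := by
  set ω := volume.real (Metric.ball (0 : EuclideanSpace ℝ (Fin (n + 1))) 1)
  set g : ℝ → ℝ := fun τ => ω * ((τ - b)⁻¹ - (τ - a)⁻¹)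
  have hderiv : ∀ τ ∈ Icc c e,
      HasDerivAt (fun τ => ω * (Real.log (τ - b) - Real.log (τ - a))) (g τ) τ := by
    intro τ hτ
    have hτb : τ - b ≠ 0 := by linarith [hτ.1]
    have hτa : τ - a ≠ 0 := by linarith [hτ.1]
    refine ((((hasDerivAt_id τ).sub_const b).log hτb).sub
      (((hasDerivAt_id τ).sub_const a).log hτa) |>.const_mul ω).congr_deriv ?_
    simp only [g, id]
    ring
  have hg : ∀ τ ∈ Ioo c e, 0 ≤ g τ := fun τ hτ =>
    mul_nonneg measureReal_nonneg
      (sub_nonneg.2 (inv_anti₀ (by linarith [hτ.1]) (by linarith)))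
  calc _ = ∫⁻ x in splitLast (n + 1) ⁻¹' (Ioo c e ×ˢ Q),
          ENNReal.ofReal (g (splitLast (n + 1) x).1) :=
        setLIntegral_congr_fun ((splitLast (n + 1)).measurable (measurableSet_Ioo.prod hQ))
          fun x hx => lintegral_slab_inv_norm_sub_pow x hab (hbc.trans hx.1.1)
    _ = ∫⁻ τ in Ioo c e, ENNReal.ofReal (g τ) * volume Q := by
        rw [setLIntegral_preimage_splitLast (f := fun p => ENNReal.ofReal (g p.1)) (by fun_prop)]
        simp only [setLIntegral_const]
    _ = _ := by
        rw [lintegral_mul_const _ (by fun_prop), mul_comm,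
          lintegral_Ioo_ofReal_eq_sub_of_hasDerivAt hce
            (fun τ hτ => (hderiv τ hτ).continuousAt.continuousWithinAt)
            (fun τ hτ => hderiv τ (Ioo_subset_Icc_self hτ)) hg]
        ring_nf

end Slab

/-- Upper bound of `G` for two coaxial boxes `Q_R'(0) × (d/2,l/2)` and `Q_R'(0) × (−l/2,−d/2)`,
in `ℝ^N`, `N = n+2 ≥ 2`:
`G(A,B) ≤ R^{N−1} ω_{N−1} (2 ln((l+d)/2) − ln(l/2) − ln(d/2))`. -/
theorem stmt_15 (n : ℕ) (d l R : ℝ) (hd : 0 < d) (hdl : d < l) (hR : 0 < R)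
    (A B : Set (EuclideanSpace ℝ (Fin (n + 2))))
    (hA : A = {x | (∀ i : Fin (n + 1), |x i.castSucc| ≤ R / 2)
      ∧ x (Fin.last (n + 1)) ∈ Set.Ioo (d / 2) (l / 2)})
    (hB : B = {x | (∀ i : Fin (n + 1), |x i.castSucc| ≤ R / 2) ∧ x (Fin.last (n + 1)) ∈ Set.Ioo (-l / 2) (-d / 2)})
    (ω : ℝ) (hω : ω = (volume (Metric.ball (0 : EuclideanSpace ℝ (Fin (n + 1))) 1)).toReal) :
    (∫⁻ x in A, ∫⁻ y in B, ENNReal.ofReal (1 / ‖y - x‖ ^ (n + 3))) ≤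
      ENNReal.ofReal (R ^ (n + 1) * ω *
        (2 * Real.log ((l + d) / 2) - Real.log (l / 2) - Real.log (d / 2))) := by
  set Q := {v : EuclideanSpace ℝ (Fin (n + 1)) | ∀ i, |v i| ≤ R / 2}
  have hA' : A = splitLast (n + 1) ⁻¹' (Ioo (d / 2) (l / 2) ×ˢ Q) := by
    ext x
    simp [hA, Q, and_comm]
  have hB' : B ⊆ splitLast (n + 1) ⁻¹' (Ioo (-l / 2) (-d / 2) ×ˢ univ) := by
    intro x hx
    simp_all
  rw [← measureReal_def] at hω
  have hω₀ : 0 ≤ ω := hω ▸ measureReal_nonneg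
  have hsum₁ : l / 2 - -d / 2 = (l + d) / 2 := by ring
  have hsum₂ : d / 2 - -l / 2 = (l + d) / 2 := by ring
  have hl₂ : l / 2 - -l / 2 = l := by ring
  have hd₂ : d / 2 - -d / 2 = d := by ring
  calc (∫⁻ x in A, ∫⁻ y in B, ENNReal.ofReal (1 / ‖y - x‖ ^ (n + 3)))
      ≤ ∫⁻ x in A, ∫⁻ y in splitLast (n + 1) ⁻¹' (Ioo (-l / 2) (-d / 2) ×ˢ univ),
          ENNReal.ofReal (1 / ‖y - x‖ ^ (n + 3)) := lintegral_mono fun x => lintegral_mono_set hB'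
    _ = volume Q * ENNReal.ofReal (ω * (2 * Real.log ((l + d) / 2) - Real.log l - Real.log d)) := by
        rw [hA']
        refine (lintegral_cylinder_lintegral_slab_inv_norm_sub_pow (by measurability)
          (by linarith) (by linarith) (by linarith)).trans ?_
        rw [hsum₁, hsum₂, hl₂, hd₂, hω]
        ring_nf
    _ ≤ _ := by
        rw [volume_setOf_forall_abs_le (by positivity), Fintype.card_fin,
          mul_div_cancel₀ R two_ne_zero, ← ENNReal.ofReal_mul (by positivity), ← mul_assoc]
        gcongr <;> linarith
end
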